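/- Let g(x) := Σ_{n≥0} binom(2n,n)·x^n/2^n (the formal series (1 − 2x)^{−1/2}) and f(x) := Σ_{n≥1} 2^{n−1}·x^n/n (the formal series −(1/2)·log(1 − 2x)), and let S(n,m) := n!·[x^n]( g(x)·f(x)^m / m! ) be the entries of the generalized signless Stirling1 Sheffer triangle (OEIS A028338). Then in ℚ[[t]] one has Σ_{m≥0} S(m+2, m)·t^m = (3 + 8t + t^2)/(1 − t)^5; equivalently, (1 − t)^5 · Σ_{m≥0} S(m+2,m)·t^m = 3 + 8t + t^2. -/

import Mathlib

open PowerSeries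

/-- The formal power series `(1 − 2x)^{−1/2} = Σ_n binom(2n,n)·x^n/2^n` over `ℚ`. -/
noncomputable def gA028338 : ℚ⟦X⟧ :=
  PowerSeries.mk fun n => ((2 * n).choose n : ℚ) / 2 ^ n

/-- The formal power series `−(1/2)·log(1 − 2x) = Σ_{n≥1} 2^{n−1}·x^n/n` over `ℚ`. -/
noncomputable def fA028338 : ℚ⟦X⟧ :=
  PowerSeries.mk fun n => if n = 0 then 0 else (2 : ℚ) ^ (n - 1) / n

/-- The entries of the generalized signless Stirling1 Sheffer triangle A028338,
`((1 − 2s)^{−1/2}, −(1/2)log(1 − 2s))`: `S(n,m) = n!·[x^n](g(x)·f(x)^m / m!)`. -/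
noncomputable def A028338 (n m : ℕ) : ℚ :=
  (n.factorial : ℚ) * coeff n (gA028338 * fA028338 ^ m) / m.factorial

/-! Since `f = x·h` with `h(0) = 1`, the coefficient `[x^(m+2)] g·f^m = [x^2] g·h^m` only sees the
first three coefficients of `g` and `h`, and is quadratic in `m`. Hence `S(m+2,m)` is a quartic
in `m`; in the binomial basis it is `3·C(m+4,4) + 8·C(m+3,4) + C(m+2,4)`, and
`Σ_m C(m+4,4)·t^m = (1 - t)^(-5)`. -/

namespace PowerSeries

variable {R : Type*} [CommRing R]

theorem coeff_two_mul (φ ψ : R⟦X⟧) :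
    coeff 2 (φ * ψ) =
      constantCoeff φ * coeff 2 ψ + coeff 1 φ * coeff 1 ψ + coeff 2 φ * constantCoeff ψ := by
  rw [coeff_mul, Finset.Nat.sum_antidiagonal_eq_sum_range_succ_mk]
  simp [Finset.sum_range_succ]

theorem coeff_two_pow_of_constantCoeff_eq_one {φ : R⟦X⟧} (hφ : constantCoeff φ = 1) (m : ℕ) :
    coeff 2 (φ ^ m) = m * coeff 2 φ + m.choose 2 * coeff 1 φ ^ 2 := by
  induction m with
  | zero => simp
  | succ m ih =>
    rw [pow_succ, coeff_two_mul, ih, coeff_one_pow, map_pow, hφ, Nat.choose_succ_succ',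
      Nat.choose_one_right]
    push_cast
    ring

/-- For `n < k` both sides vanish: the right one because `d + n - k < d`. -/
theorem coeff_X_pow_mul_mk_add_choose {d k : ℕ} (hk : k ≤ d) (n : ℕ) :
    coeff n (X ^ k * mk fun n => ((d + n).choose d : R)) = ((d + n - k).choose d : R) := by
  rw [coeff_X_pow_mul', coeff_mk]
  split_ifs with hkn
  · rw [Nat.add_sub_assoc hkn]
  · rw [Nat.choose_eq_zero_of_lt (by omega), Nat.cast_zero]

end PowerSeries

theorem fA028338_eq_X_mul : fA028338 = X * mk fun n => (2 : ℚ) ^ n / (n + 1) := by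
  ext (_ | n)
  · simp [fA028338]
  · simp [fA028338, coeff_succ_X_mul]

theorem coeff_add_two_gA028338_mul_fA028338_pow (m : ℕ) :
    coeff (m + 2) (gA028338 * fA028338 ^ m) = 3 / 2 + m + m * 4 / 3 + m.choose 2 := by
  set h : ℚ⟦X⟧ := mk fun n => (2 : ℚ) ^ n / (n + 1)
  have hh : constantCoeff h = 1 := by simp [h]
  have shift : coeff (m + 2) (gA028338 * fA028338 ^ m) = coeff 2 (gA028338 * h ^ m) := by
    rw [fA028338_eq_X_mul, mul_pow, mul_left_comm, add_comm, coeff_X_pow_mul]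
  rw [shift, coeff_two_mul, coeff_two_pow_of_constantCoeff_eq_one hh, coeff_one_pow, map_pow, hh]
  norm_num [gA028338, h, show (2 * 2).choose 2 = 6 from rfl]
  ring

theorem A028338_add_two_self (m : ℕ) :
    A028338 (m + 2) m = 3 * (m + 4).choose 4 + 8 * (m + 3).choose 4 + (m + 2).choose 4 := by
  rw [A028338, coeff_add_two_gA028338_mul_fA028338_pow, Nat.cast_choose_two,
    Nat.factorial_succ, Nat.factorial_succ]
  simp only [Nat.cast_choose_eq_descPochhammer_div, descPochhammer_succ_eval, descPochhammer_zero,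
    Polynomial.eval_one]
  have hm : (m.factorial : ℚ) ≠ 0 := by positivity
  push_cast
  field_simp
  ring

theorem mk_A028338_add_two_self :
    mk (fun m => A028338 (m + 2) m) =
      (3 + 8 * X + X ^ 2) * mk fun n => ((4 + n).choose 4 : ℚ) := by
  ext n
  rw [coeff_mk, A028338_add_two_self,
    show (3 + 8 * X + X ^ 2 : ℚ⟦X⟧) = C 3 * X ^ 0 + C 8 * X ^ 1 + X ^ 2 by
      rw [map_ofNat, map_ofNat]; ring]
  simp only [add_mul, mul_assoc, map_add, coeff_C_mul]
  rw [coeff_X_pow_mul_mk_add_choose (by norm_num), coeff_X_pow_mul_mk_add_choose (by norm_num),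
    coeff_X_pow_mul_mk_add_choose (by norm_num), show 4 + n - 0 = n + 4 by omega,
    show 4 + n - 1 = n + 3 by omega, show 4 + n - 2 = n + 2 by omega]

/-- The o.g.f. of the third (`d = 2`) diagonal of the triangle A028338:
`Σ_m S(m+2,m)·t^m = (3 + 8t + t^2)/(1 − t)^5`, stated in the equivalent form
`(1 − t)^5 · Σ_m S(m+2,m)·t^m = 3 + 8t + t^2` in `ℚ[[t]]`. -/
theorem A028338_diagonal_two_ogf :
    (1 - PowerSeries.X : ℚ⟦X⟧) ^ 5 * PowerSeries.mk (fun m => A028338 (m + 2) m)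
      = 3 + 8 * PowerSeries.X + PowerSeries.X ^ 2 := by
  calc (1 - X : ℚ⟦X⟧) ^ 5 * mk (fun m => A028338 (m + 2) m)
      = (3 + 8 * X + X ^ 2) * ((mk fun n => ((4 + n).choose 4 : ℚ)) * (1 - X) ^ (4 + 1)) := by
        rw [mk_A028338_add_two_self]; ring
    _ = 3 + 8 * X + X ^ 2 := by rw [mk_add_choose_mul_one_sub_pow_eq_one, mul_one]
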